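/- For the q-antisymmetrizer \mathcal{A}_k^q and a q-super Manin matrix M, the identity \mathcal{A}_k^q M_1 \cdots M_k \mathcal{A}_k^q = \mathcal{A}_k^q M_1 \cdots M_k holds in the superalgebra A \otimes End(\mathbb{C}^{m|n})^{\otimes k}. -/

import Mathlib

open scoped BigOperators Classical
open Finset

namespace QSM

/-- Parity of a basis index of `ℂ^{m|n}`: `0` (even) for indices `< m`, `1` (odd) otherwise. -/
def pa (m : ℕ) {N : ℕ} (i : Fin N) : ℕ := if (i : ℕ) < m then 0 else 1

/-- The sign `ε(i - j)`: `1` if `i > j`, `0` if `i = j`, `-1` if `i < j`. -/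
def eps {N : ℕ} (i j : Fin N) : ℤ :=
  if (j : ℕ) < (i : ℕ) then 1 else if (i : ℕ) < (j : ℕ) then -1 else 0

variable {B : Type*} [Ring B] [Algebra ℂ B]

/-- Map a complex matrix into a matrix over the `ℂ`-algebra `B`. -/
noncomputable def cmap {I : Type*} (X : Matrix I I ℂ) : Matrix I I B :=
  X.map (algebraMap ℂ B)

/-- The super tensor product `E_{ij} ⊗ E_{kl}` of matrix units, as an operator on the
graded tensor square of `ℂ^{m|n}` (super sign conventions). -/
noncomputable def stu (m : ℕ) {N : ℕ} (i j k l : Fin N) :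
    Matrix (Fin N × Fin N) (Fin N × Fin N) ℂ :=
  Matrix.of fun p r =>
    ((-1 : ℂ) ^ ((pa m k + pa m l) * pa m r.1)) *
      (if p.1 = i ∧ r.1 = j then 1 else 0) * (if p.2 = k ∧ r.2 = l then 1 else 0)

/-- The operator `P^q = ∑_{i,j} q^{ε(i-j)} (-1)^{\bar j} E_{ij} ⊗ E_{ji}` on
`(ℂ^{m|n})^{⊗2}`. -/
noncomputable def Pq (q : ℂ) (m : ℕ) {N : ℕ} : Matrix (Fin N × Fin N) (Fin N × Fin N) ℂ :=
  ∑ i : Fin N, ∑ j : Fin N, (q ^ eps i j * (-1 : ℂ) ^ pa m j) • stu m i j j i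

/-- `M₁ = ∑ (-1)^{\bar i\bar j+\bar j} M_{ij} ⊗ E_{ij} ⊗ 1` on the tensor square. -/
noncomputable def Mone (m : ℕ) {N : ℕ} (M : Matrix (Fin N) (Fin N) B) :
    Matrix (Fin N × Fin N) (Fin N × Fin N) B :=
  Matrix.of fun p r =>
    if p.2 = r.2 then
      ((-1 : ℂ) ^ (pa m p.1 * pa m r.1 + pa m r.1)) • M p.1 r.1
    else 0

/-- `M₂ = ∑ (-1)^{\bar i\bar j+\bar j} M_{ij} ⊗ 1 ⊗ E_{ij}` on the tensor square
(with the super sign of `1 ⊗ E_{ij}`). -/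
noncomputable def Mtwo (m : ℕ) {N : ℕ} (M : Matrix (Fin N) (Fin N) B) :
    Matrix (Fin N × Fin N) (Fin N × Fin N) B :=
  Matrix.of fun p r =>
    if p.1 = r.1 then
      ((-1 : ℂ) ^ (pa m p.2 * pa m r.2 + pa m r.2 + (pa m p.2 + pa m r.2) * pa m r.1)) •
        M p.2 r.2
    else 0

/-- The `q`-super Manin matrix condition in matrix form:
`(1 - P^q) M₁ M₂ (1 + P^q) = 0`. -/
def IsManin (q : ℂ) (m : ℕ) {N : ℕ} (M : Matrix (Fin N) (Fin N) B) : Prop :=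
  (1 - cmap (Pq q m)) * Mone m M * Mtwo m M * (1 + cmap (Pq q m)) = 0

/-- The entrywise relations of the right quantum superalgebra `𝓜_{m|n}`. -/
def ManinRel (q : ℂ) (m : ℕ) {N : ℕ} (M : Matrix (Fin N) (Fin N) B) : Prop :=
  (∀ i j, pa m i = 1 → pa m j = 0 → M i j * M i j = 0) ∧
  (∀ i k l, pa m i = 1 →
    M i k * M i l = (q ^ eps l k * (-1 : ℂ) ^ ((pa m k + 1) * (pa m l + 1))) • (M i l * M i k)) ∧
  (∀ i j k, pa m k = 0 →
    M i k * M j k = (q ^ eps i j * (-1 : ℂ) ^ (pa m i * pa m j)) • (M j k * M i k)) ∧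
  (∀ i j k l,
    M i j * M k l -
        (q ^ (eps i k + eps l j) * (-1 : ℂ) ^ ((pa m i + pa m j) * (pa m k + pa m l))) •
          (M k l * M i j)
      = (q ^ eps i k * (-1 : ℂ) ^ (pa m i * pa m k + pa m j * pa m k + pa m i * pa m j)) •
            (M k j * M i l)
        - (q ^ eps l j * (-1 : ℂ) ^ (pa m j * pa m k + pa m j * pa m l + pa m k * pa m l)) •
            (M i l * M k j))

/-- The operator `P^q_σ` on `(ℂ^{m|n})^{⊗k}` (defined via reduced decompositions of `σ`;
equivalently, by the explicit inversion formula used here). -/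
noncomputable def Pperm (q : ℂ) (m : ℕ) {N k : ℕ} (σ : Equiv.Perm (Fin k)) :
    Matrix (Fin k → Fin N) (Fin k → Fin N) ℂ :=
  Matrix.of fun f g =>
    if f = g ∘ ⇑σ⁻¹ then
      ∏ p ∈ Finset.univ.filter (fun p : Fin k × Fin k => p.1 < p.2 ∧ σ p.2 < σ p.1),
        (q ^ eps (g p.1) (g p.2) * (-1 : ℂ) ^ (pa m (g p.1) * pa m (g p.2)))
    else 0

/-- The `q`-antisymmetrizer over the tensor positions in `S`. -/
noncomputable def AqS (q : ℂ) (m : ℕ) {N k : ℕ} (S : Finset (Fin k)) :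
    Matrix (Fin k → Fin N) (Fin k → Fin N) ℂ :=
  (S.card.factorial : ℂ)⁻¹ •
    ∑ σ ∈ Finset.univ.filter (fun σ : Equiv.Perm (Fin k) => ∀ t ∉ S, σ t = t),
      (((Equiv.Perm.sign σ : ℤ) : ℂ)) • Pperm q m (N := N) σ

/-- The `q`-symmetrizer over the tensor positions in `S`. -/
noncomputable def HqS (q : ℂ) (m : ℕ) {N k : ℕ} (S : Finset (Fin k)) :
    Matrix (Fin k → Fin N) (Fin k → Fin N) ℂ :=
  (S.card.factorial : ℂ)⁻¹ •
    ∑ σ ∈ Finset.univ.filter (fun σ : Equiv.Perm (Fin k) => ∀ t ∉ S, σ t = t),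
      Pperm q m (N := N) σ

/-- `M_a`: the copy of `M` in the `a`-th slot of `B ⊗ End(ℂ^{m|n})^{⊗k}`, with the super
sign factors `(-1)^{\bar i\bar j+\bar j}` and the super signs of `1⊗⋯⊗E_{ij}⊗⋯⊗1`. -/
noncomputable def Mslot (m : ℕ) {N k : ℕ} (M : Matrix (Fin N) (Fin N) B) (a : Fin k) :
    Matrix (Fin k → Fin N) (Fin k → Fin N) B :=
  Matrix.of fun f g =>
    if ∀ b, b ≠ a → f b = g b then
      ((-1 : ℂ) ^ (pa m (f a) * pa m (g a) + pa m (g a)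
          + (pa m (f a) + pa m (g a)) *
              ∑ b ∈ Finset.univ.filter (fun b => b < a), pa m (g b))) •
        M (f a) (g a)
    else 0

/-- The product `M₁ M₂ ⋯ M_k`. -/
noncomputable def MProd (m : ℕ) {N : ℕ} (M : Matrix (Fin N) (Fin N) B) (k : ℕ) :
    Matrix (Fin k → Fin N) (Fin k → Fin N) B :=
  (List.ofFn fun a : Fin k => Mslot m M a).prod

/-- The `q`-super Manin condition in the form `𝒜₂^q M₁ M₂ ℋ₂^q = 0`. -/
def IsManin2 (q : ℂ) (m : ℕ) {N : ℕ} (M : Matrix (Fin N) (Fin N) B) : Prop :=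
  cmap (AqS q m (Finset.univ : Finset (Fin 2))) * Mslot m M (0 : Fin 2) *
      Mslot m M (1 : Fin 2) * cmap (HqS q m (Finset.univ : Finset (Fin 2))) = 0

/-- The supertrace `str_{1,…,k}` over all `k` tensor slots. -/
noncomputable def strAll (m : ℕ) {N k : ℕ}
    (X : Matrix (Fin k → Fin N) (Fin k → Fin N) B) : B :=
  ∑ f : Fin k → Fin N, ((-1 : ℂ) ^ (∑ t, pa m (f t))) • X f f

/-- The supertrace of an `N × N` matrix. -/
noncomputable def strM (m : ℕ) {N : ℕ} (X : Matrix (Fin N) (Fin N) B) : B :=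
  ∑ i, ((-1 : ℂ) ^ pa m i) • X i i

/-- The star product `B * C = str₁ (P^q_{12} B₁ C₂)`. -/
noncomputable def starMul (q : ℂ) (m : ℕ) {N : ℕ} (X Y : Matrix (Fin N) (Fin N) B) :
    Matrix (Fin N) (Fin N) B :=
  Matrix.of fun i j =>
    ((-1 : ℂ) ^ (pa m i * pa m j + pa m j)) •
      ∑ a : Fin N, ((-1 : ℂ) ^ (pa m a * (1 + pa m i + pa m j))) •
        ((cmap (Pperm q m (Equiv.swap (0 : Fin 2) 1)) * Mslot m X (0 : Fin 2) *
            Mslot m Y (1 : Fin 2) :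
          Matrix (Fin 2 → Fin N) (Fin 2 → Fin N) B) ![a, i] ![a, j])

/-- The powers `M^{[k]}` of `M` with respect to the star product. -/
noncomputable def Mpow (q : ℂ) (m : ℕ) {N : ℕ} (M : Matrix (Fin N) (Fin N) B) :
    ℕ → Matrix (Fin N) (Fin N) B
  | 0 => 1
  | 1 => M
  | (j + 2) => starMul q m (Mpow q m M (j + 1)) M

/-- Coefficient of `t^k` in `A(t) = ∑ (-t)^k str_{1,…,k}(𝒜_k^q M₁⋯M_k)`. -/
noncomputable def coefA (q : ℂ) (m : ℕ) {N : ℕ} (M : Matrix (Fin N) (Fin N) B) (k : ℕ) : B :=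
  ((-1 : ℂ) ^ k) •
    strAll m (cmap (AqS q m (Finset.univ : Finset (Fin k))) * MProd m M k)

/-- Coefficient of `t^k` in `S(t) = ∑ t^k str_{1,…,k}(ℋ_k^q M₁⋯M_k)`. -/
noncomputable def coefS (q : ℂ) (m : ℕ) {N : ℕ} (M : Matrix (Fin N) (Fin N) B) (k : ℕ) : B :=
  strAll m (cmap (HqS q m (Finset.univ : Finset (Fin k))) * MProd m M k)

/-- Coefficient of `t^k` in `T(t) = ∑ t^k str(M^{[k+1]})`. -/
noncomputable def coefT (q : ℂ) (m : ℕ) {N : ℕ} (M : Matrix (Fin N) (Fin N) B) (k : ℕ) : B :=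
  strM m (Mpow q m M (k + 1))

/-- Coefficients `M^{i_1…i_k}_{j_1…j_k}` of `𝒜_k^q M₁⋯M_k` in the basis
`E_{i_1j_1} ⊗ ⋯ ⊗ E_{i_kj_k}` (super sign conventions). -/
noncomputable def MIJ (q : ℂ) (m : ℕ) {N k : ℕ} (M : Matrix (Fin N) (Fin N) B)
    (f g : Fin k → Fin N) : B :=
  ((-1 : ℂ) ^ (∑ a : Fin k, (pa m (f a) + pa m (g a)) *
      ∑ b ∈ Finset.univ.filter (fun b => b < a), pa m (g b))) •
    ((cmap (AqS q m (Finset.univ : Finset (Fin k))) * MProd m M k :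
      Matrix (Fin k → Fin N) (Fin k → Fin N) B) f g)

/-- Number of inversions (the length `l(σ)`) of a permutation. -/
def invCount {r : ℕ} (σ : Equiv.Perm (Fin r)) : ℕ :=
  (Finset.univ.filter fun p : Fin r × Fin r => p.1 < p.2 ∧ σ p.2 < σ p.1).card

/-- The quantum determinant `det_q(A) = ∑_σ (-q)^{-l(σ)} A_{σ(1),1} ⋯ A_{σ(r),r}`. -/
noncomputable def detq (q : ℂ) {r : ℕ} (A : Matrix (Fin r) (Fin r) B) : B :=
  ∑ σ : Equiv.Perm (Fin r),
    ((-q) ^ (-(invCount σ : ℤ))) • (List.ofFn fun i : Fin r => A (σ i) i).prod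

/-- The quantum Berezinian of a type `(r|s)` matrix `A` with (two-sided) inverse `Ainv`. -/
noncomputable def Ber (q : ℂ) (r s : ℕ) (A Ainv : Matrix (Fin (r + s)) (Fin (r + s)) B) : B :=
  (∑ σ : Equiv.Perm (Fin r), ((-q) ^ (-(invCount σ : ℤ))) •
      (List.ofFn fun i : Fin r => A (Fin.castAdd s (σ i)) (Fin.castAdd s i)).prod) *
  (∑ ρ : Equiv.Perm (Fin s), ((-q) ^ (-(invCount ρ : ℤ))) •
      (List.ofFn fun j : Fin s => Ainv (Fin.natAdd r j) (Fin.natAdd r (ρ j))).prod)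

/-- The `Π ∘ st` transform of a type `(r'|s')` matrix: a type `(s'|r')` matrix. -/
noncomputable def PiSt (r' s' : ℕ) (A : Matrix (Fin (r' + s')) (Fin (r' + s')) B) :
    Matrix (Fin (s' + r')) (Fin (s' + r')) B :=
  Matrix.of fun i j =>
    ((-1 : ℂ) ^ (pa s' i * (pa s' i + pa s' j))) •
      A (Fin.rev (Fin.cast (Nat.add_comm s' r') j)) (Fin.rev (Fin.cast (Nat.add_comm s' r') i))

/-- Left corner embedding `Fin a → Fin b`. -/
def embL (a b : ℕ) (h : a ≤ b) : Fin a → Fin b :=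
  fun i => ⟨(i : ℕ), lt_of_lt_of_le i.isLt h⟩

/-- Embedding of `Fin a` into `Fin b` shifted by `c`. -/
def embR (c a b : ℕ) (h : c + a ≤ b) : Fin a → Fin b :=
  fun i => ⟨c + (i : ℕ), by have := i.isLt; omega⟩

/-- `P^q ⊗ 1` on the triple tensor space. -/
noncomputable def P12 (q : ℂ) (m : ℕ) {N : ℕ} :
    Matrix (Fin N × Fin N × Fin N) (Fin N × Fin N × Fin N) ℂ :=
  Matrix.of fun p r =>
    Pq q m (p.1, p.2.1) (r.1, r.2.1) * (if p.2.2 = r.2.2 then 1 else 0)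

/-- `1 ⊗ P^q` on the triple tensor space (no extra super sign: `P^q` is even). -/
noncomputable def P23 (q : ℂ) (m : ℕ) {N : ℕ} :
    Matrix (Fin N × Fin N × Fin N) (Fin N × Fin N × Fin N) ℂ :=
  Matrix.of fun p r =>
    (if p.1 = r.1 then 1 else 0) * Pq q m (p.2.1, p.2.2) (r.2.1, r.2.2)

section Aux

theorem Equiv.Perm.inv_apply_self {α : Type*} (f : Equiv.Perm α) (x : α) : f⁻¹ (f x) = x :=
  f.symm_apply_apply x

theorem Equiv.Perm.apply_inv_self {α : Type*} (f : Equiv.Perm α) (x : α) : f (f⁻¹ x) = x :=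
  f.apply_symm_apply x

lemma pa01 (m : ℕ) {N : ℕ} (i : Fin N) : pa m i = 0 ∨ pa m i = 1 := by
  unfold pa; split <;> simp

lemma neg_one_pow_mod2 (n : ℕ) : ((-1 : ℂ)) ^ n = (-1) ^ (n % 2) := by
  conv_lhs => rw [← Nat.div_add_mod n 2]
  rw [pow_add, pow_mul, neg_one_sq, one_pow, one_mul]

lemma neg_one_pow_congr {a b : ℕ} (h : a % 2 = b % 2) : ((-1 : ℂ)) ^ a = (-1) ^ b := by
  rw [neg_one_pow_mod2 a, neg_one_pow_mod2 b, h]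

lemma eps_add_eps {N : ℕ} (i j : Fin N) : eps i j + eps j i = 0 := by
  unfold eps; split_ifs <;> omega

/-- The scalar factor appearing in `Pperm`. -/
noncomputable def Ffac (q : ℂ) (m : ℕ) {N : ℕ} (x y : Fin N) : ℂ :=
  q ^ eps x y * (-1 : ℂ) ^ (pa m x * pa m y)

lemma Ffac_mul_symm {q : ℂ} (hq : q ≠ 0) (m : ℕ) {N : ℕ} (x y : Fin N) :
    Ffac q m x y * Ffac q m y x = 1 := by
  unfold Ffac
  rw [mul_mul_mul_comm, ← zpow_add₀ hq, eps_add_eps, zpow_zero, one_mul, ← pow_add]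
  have h : pa m x * pa m y + pa m y * pa m x = 2 * (pa m x * pa m y) := by ring
  rw [h, pow_mul, neg_one_sq, one_pow]

/-- The product of `Ffac` over the inversions of `σ`. -/
noncomputable def Wfun (q : ℂ) (m : ℕ) {N k : ℕ} (σ : Equiv.Perm (Fin k))
    (g : Fin k → Fin N) : ℂ :=
  ∏ p ∈ Finset.univ.filter (fun p : Fin k × Fin k => p.1 < p.2 ∧ σ p.2 < σ p.1),
    Ffac q m (g p.1) (g p.2)

lemma Pperm_apply (q : ℂ) (m : ℕ) {N k : ℕ} (σ : Equiv.Perm (Fin k)) (f g : Fin k → Fin N) :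
    Pperm q m σ f g = if f = g ∘ ⇑σ⁻¹ then Wfun q m σ g else 0 := rfl

/-- Sorting image of a pair under a permutation. -/
def spair {k : ℕ} (τ : Equiv.Perm (Fin k)) (p : Fin k × Fin k) : Fin k × Fin k :=
  if τ p.1 < τ p.2 then (τ p.1, τ p.2) else (τ p.2, τ p.1)

lemma spair_fst_lt {k : ℕ} (τ : Equiv.Perm (Fin k)) {p : Fin k × Fin k} (hp : p.1 < p.2) :
    (spair τ p).1 < (spair τ p).2 := by
  unfold spair; split_ifs with h
  · exact h
  · have hne : τ p.2 ≠ τ p.1 := fun e => ne_of_gt hp (τ.injective e)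
    exact lt_of_le_of_ne (not_lt.mp h) hne

lemma spair_spair {k : ℕ} (τ : Equiv.Perm (Fin k)) {p : Fin k × Fin k} (hp : p.1 < p.2) :
    spair τ⁻¹ (spair τ p) = p := by
  rcases p with ⟨x, y⟩
  have hp' : x < y := hp
  by_cases h1 : τ x < τ y
  · rw [show spair τ (x, y) = (τ x, τ y) from if_pos h1]
    unfold spair
    simp only [Equiv.Perm.inv_apply_self]
    exact if_pos hp'
  · rw [show spair τ (x, y) = (τ y, τ x) from if_neg h1]
    unfold spair
    simp only [Equiv.Perm.inv_apply_self]
    exact if_neg (asymm hp')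

lemma prod_spair {Mo : Type*} [CommMonoid Mo] {k : ℕ} (τ : Equiv.Perm (Fin k))
    (G : Fin k × Fin k → Mo) :
    ∏ p ∈ Finset.univ.filter (fun p : Fin k × Fin k => p.1 < p.2), G p
      = ∏ p ∈ Finset.univ.filter (fun p : Fin k × Fin k => p.1 < p.2), G (spair τ p) := by
  have hmem : ∀ (ρ : Equiv.Perm (Fin k)) (p : Fin k × Fin k),
      p ∈ Finset.univ.filter (fun p : Fin k × Fin k => p.1 < p.2) →
      spair ρ p ∈ Finset.univ.filter (fun p : Fin k × Fin k => p.1 < p.2) := by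
    intro ρ p hp
    simp only [Finset.mem_filter, Finset.mem_univ, true_and] at hp ⊢
    exact spair_fst_lt ρ hp
  refine Finset.prod_nbij' (spair τ⁻¹) (spair τ) (hmem τ⁻¹) (hmem τ) ?_ ?_ ?_
  · intro p hp
    simp only [Finset.mem_filter, Finset.mem_univ, true_and] at hp
    have := spair_spair τ⁻¹ (p := p) hp
    rwa [inv_inv] at this
  · intro p hp
    simp only [Finset.mem_filter, Finset.mem_univ, true_and] at hp
    exact spair_spair τ hp
  · intro p hp
    simp only [Finset.mem_filter, Finset.mem_univ, true_and] at hp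
    have h1 : spair τ (spair τ⁻¹ p) = p := by
      have := spair_spair τ⁻¹ (p := p) hp
      rwa [inv_inv] at this
    rw [h1]

lemma Wfun_filter (q : ℂ) (m : ℕ) {N k : ℕ} (ρ : Equiv.Perm (Fin k)) (g : Fin k → Fin N) :
    Wfun q m ρ g
      = ∏ p ∈ Finset.univ.filter (fun p : Fin k × Fin k => p.1 < p.2),
          (if ρ p.2 < ρ p.1 then Ffac q m (g p.1) (g p.2) else 1) := by
  unfold Wfun
  rw [← Finset.filter_filter, Finset.prod_filter]

lemma Wfun_mul {q : ℂ} (hq : q ≠ 0) (m : ℕ) {N k : ℕ} (σ τ : Equiv.Perm (Fin k))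
    (h : Fin k → Fin N) :
    Wfun q m σ (h ∘ ⇑τ⁻¹) * Wfun q m τ h = Wfun q m (σ * τ) h := by
  rw [Wfun_filter, Wfun_filter, Wfun_filter]
  rw [prod_spair τ
    (G := fun p => if σ p.2 < σ p.1 then Ffac q m ((h ∘ ⇑τ⁻¹) p.1) ((h ∘ ⇑τ⁻¹) p.2) else 1)]
  rw [← Finset.prod_mul_distrib]
  apply Finset.prod_congr rfl
  intro p hp
  simp only [Finset.mem_filter, Finset.mem_univ, true_and] at hp
  simp only [Equiv.Perm.mul_apply]
  show _ = (if σ (τ p.2) < σ (τ p.1) then _ else _)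
  by_cases h1 : τ p.1 < τ p.2
  · rw [show spair τ p = (τ p.1, τ p.2) from if_pos h1]
    simp only [Function.comp_apply, Equiv.Perm.inv_apply_self]
    rw [if_neg (asymm h1), mul_one]
  · have h2 : τ p.2 < τ p.1 :=
      lt_of_le_of_ne (not_lt.mp h1) (fun e => ne_of_gt hp (τ.injective e))
    rw [show spair τ p = (τ p.2, τ p.1) from if_neg h1]
    simp only [Function.comp_apply, Equiv.Perm.inv_apply_self]
    rw [if_pos h2]
    by_cases h3 : σ (τ p.1) < σ (τ p.2)
    · rw [if_pos h3, if_neg (asymm h3)]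
      rw [mul_comm]
      exact Ffac_mul_symm hq m _ _
    · have h4 : σ (τ p.2) < σ (τ p.1) :=
        lt_of_le_of_ne (not_lt.mp h3) (fun e => ne_of_gt h2 ((σ.injective e).symm))
      rw [if_neg h3, if_pos h4, one_mul]

lemma Pperm_mul {q : ℂ} (hq : q ≠ 0) (m : ℕ) {N k : ℕ} (σ τ : Equiv.Perm (Fin k)) :
    Pperm q m (N := N) σ * Pperm q m τ = Pperm q m (σ * τ) := by
  ext f h
  rw [Matrix.mul_apply]
  have step : ∀ g : Fin k → Fin N,
      Pperm q m σ f g * Pperm q m τ g h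
        = if g = h ∘ ⇑τ⁻¹ then (if f = g ∘ ⇑σ⁻¹ then Wfun q m σ g else 0) * Wfun q m τ h
          else 0 := by
    intro g
    rw [Pperm_apply q m σ f g, Pperm_apply q m τ g h]
    by_cases hg : g = h ∘ ⇑τ⁻¹
    · rw [if_pos hg, if_pos hg]
    · rw [if_neg hg, if_neg hg, mul_zero]
  rw [Finset.sum_congr rfl (fun g _ => step g), Finset.sum_ite_eq' Finset.univ (h ∘ ⇑τ⁻¹)]
  simp only [Finset.mem_univ, if_true]
  have hcomp : (h ∘ ⇑τ⁻¹) ∘ ⇑σ⁻¹ = h ∘ ⇑(σ * τ)⁻¹ := by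
    rw [mul_inv_rev, Equiv.Perm.coe_mul]
    rfl
  rw [Pperm_apply q m (σ * τ) f h, hcomp]
  by_cases hf : f = h ∘ ⇑(σ * τ)⁻¹
  · rw [if_pos hf, if_pos hf]
    exact Wfun_mul hq m σ τ h
  · rw [if_neg hf, if_neg hf, zero_mul]

lemma Pperm_one (q : ℂ) (m : ℕ) {N k : ℕ} :
    Pperm q m (N := N) (1 : Equiv.Perm (Fin k)) = 1 := by
  ext f g
  rw [Pperm_apply, Matrix.one_apply]
  have h1 : Finset.univ.filter (fun p : Fin k × Fin k =>
      p.1 < p.2 ∧ (1 : Equiv.Perm (Fin k)) p.2 < (1 : Equiv.Perm (Fin k)) p.1) = ∅ := by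
    ext p
    simp only [Finset.mem_filter, Finset.mem_univ, true_and, Finset.notMem_empty, iff_false,
      Equiv.Perm.coe_one, id_eq]
    intro hmem
    obtain ⟨ha, hb⟩ := (Finset.mem_filter.mp hmem).2
    exact absurd hb (asymm ha)
  unfold Wfun
  rw [h1, Finset.prod_empty]
  simp [inv_one]

lemma cmap_apply {I : Type*} (X : Matrix I I ℂ) (i j : I) :
    (cmap X : Matrix I I B) i j = algebraMap ℂ B (X i j) := rfl

lemma cmap_mul {I : Type*} [Fintype I] (X Y : Matrix I I ℂ) :
    (cmap (X * Y) : Matrix I I B) = cmap X * cmap Y :=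
  Matrix.map_mul

lemma cmap_one {I : Type*} [DecidableEq I] : (cmap (1 : Matrix I I ℂ) : Matrix I I B) = 1 :=
  Matrix.map_one _ (map_zero _) (map_one _)

lemma cmap_smul {I : Type*} (c : ℂ) (X : Matrix I I ℂ) :
    (cmap (c • X) : Matrix I I B) = c • cmap X := by
  ext i j
  simp [cmap, Matrix.smul_apply, Algebra.smul_def]

lemma cmap_sub {I : Type*} (X Y : Matrix I I ℂ) :
    (cmap (X - Y) : Matrix I I B) = cmap X - cmap Y := by
  ext i j; simp [cmap]

lemma cmap_add {I : Type*} (X Y : Matrix I I ℂ) :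
    (cmap (X + Y) : Matrix I I B) = cmap X + cmap Y := by
  ext i j; simp [cmap]

lemma cmap_sum {I : Type*} {α : Type*} (s : Finset α) (f : α → Matrix I I ℂ) :
    (cmap (∑ x ∈ s, f x) : Matrix I I B) = ∑ x ∈ s, cmap (f x) := by
  ext i j
  simp [cmap, Matrix.sum_apply]

/-- Sign of a permutation as a complex number. -/
noncomputable def sgnC {k : ℕ} (σ : Equiv.Perm (Fin k)) : ℂ := ((Equiv.Perm.sign σ : ℤ) : ℂ)

lemma sgnC_mul {k : ℕ} (σ τ : Equiv.Perm (Fin k)) : sgnC (σ * τ) = sgnC σ * sgnC τ := by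
  simp [sgnC, map_mul]

lemma sgnC_sq {k : ℕ} (σ : Equiv.Perm (Fin k)) : sgnC σ * sgnC σ = 1 := by
  unfold sgnC
  rcases Int.units_eq_one_or (Equiv.Perm.sign σ) with h | h <;> rw [h] <;> norm_num

lemma filter_perm_univ {k : ℕ} :
    (Finset.univ.filter
      (fun σ : Equiv.Perm (Fin k) => ∀ t ∉ (Finset.univ : Finset (Fin k)), σ t = t))
      = Finset.univ := by
  apply Finset.filter_true_of_mem
  intro σ _ t ht
  exact absurd (Finset.mem_univ t) ht

lemma AqS_univ_eq (q : ℂ) (m : ℕ) {N k : ℕ} :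
    AqS q m (Finset.univ : Finset (Fin k)) (N := N)
      = ((k.factorial : ℂ))⁻¹ • ∑ σ : Equiv.Perm (Fin k), sgnC σ • Pperm q m (N := N) σ := by
  unfold AqS
  rw [filter_perm_univ, Finset.card_univ, Fintype.card_fin]
  rfl

lemma AqS_mul_Pperm {q : ℂ} (hq : q ≠ 0) (m : ℕ) {N k : ℕ} (ρ : Equiv.Perm (Fin k)) :
    AqS q m (Finset.univ : Finset (Fin k)) (N := N) * Pperm q m ρ
      = sgnC ρ • AqS q m (Finset.univ : Finset (Fin k)) := by
  rw [AqS_univ_eq, smul_mul_assoc, Finset.sum_mul]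
  simp only [smul_mul_assoc, Pperm_mul hq]
  have hsum : ∑ σ : Equiv.Perm (Fin k), sgnC σ • Pperm q m (N := N) (σ * ρ)
      = ∑ σ : Equiv.Perm (Fin k), sgnC ρ • (sgnC σ • Pperm q m (N := N) σ) := by
    apply Fintype.sum_equiv (Equiv.mulRight ρ)
    intro σ
    simp only [Equiv.coe_mulRight]
    rw [smul_smul, sgnC_mul]
    congr 1
    rw [mul_comm (sgnC σ) (sgnC ρ), ← mul_assoc, sgnC_sq, one_mul]
  rw [hsum, ← Finset.smul_sum, smul_comm]

end Aux
section Aux2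


lemma Mslot_apply (m : ℕ) {N k : ℕ} (M : Matrix (Fin N) (Fin N) B) (a : Fin k)
    (f g : Fin k → Fin N) :
    Mslot m M a f g
      = if ∀ b, b ≠ a → f b = g b then
          ((-1 : ℂ) ^ (pa m (f a) * pa m (g a) + pa m (g a)
              + (pa m (f a) + pa m (g a)) *
                  ∑ b ∈ Finset.univ.filter (fun b => b < a), pa m (g b))) • M (f a) (g a)
        else 0 := rfl

lemma commute_Pperm_Mslot (q : ℂ) (m : ℕ) {N k : ℕ} (M : Matrix (Fin N) (Fin N) B)
    (σ : Equiv.Perm (Fin k)) (a : Fin k) (hσa : σ a = a) (hinv : ∀ t, t < a ↔ σ t < a) :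
    (cmap (Pperm q m (N := N) σ) : Matrix _ _ B) * Mslot m M a
      = Mslot m M a * cmap (Pperm q m σ) := by
  have hσa' : σ⁻¹ a = a := by
    conv_lhs => rw [← hσa]
    rw [Equiv.Perm.inv_apply_self]
  ext f h
  rw [Matrix.mul_apply, Matrix.mul_apply]
  have hLc : ∀ g : Fin k → Fin N, (cmap (Pperm q m σ) : Matrix _ _ B) f g
      = if g = f ∘ ⇑σ then algebraMap ℂ B (Wfun q m σ g) else 0 := by
    intro g
    rw [cmap_apply, Pperm_apply]
    have hiff : (f = g ∘ ⇑σ⁻¹) ↔ (g = f ∘ ⇑σ) := by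
      constructor
      · intro e; funext t
        rw [e]; simp [Function.comp, Equiv.Perm.inv_apply_self]
      · intro e; funext t
        rw [e]; simp [Function.comp, Equiv.Perm.apply_inv_self]
    rw [if_congr hiff rfl rfl, apply_ite (algebraMap ℂ B), map_zero]
  have hRc : ∀ g : Fin k → Fin N, (cmap (Pperm q m σ) : Matrix _ _ B) g h
      = if g = h ∘ ⇑σ⁻¹ then algebraMap ℂ B (Wfun q m σ h) else 0 := by
    intro g
    rw [cmap_apply, Pperm_apply, apply_ite (algebraMap ℂ B), map_zero]
  simp only [hLc, hRc, ite_mul, mul_ite, zero_mul, mul_zero]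
  rw [Finset.sum_ite_eq' Finset.univ (f ∘ ⇑σ), Finset.sum_ite_eq' Finset.univ (h ∘ ⇑σ⁻¹)]
  simp only [Finset.mem_univ, if_true]
  rw [Mslot_apply, Mslot_apply]
  have hcond : (∀ b, b ≠ a → (f ∘ ⇑σ) b = h b) ↔ (∀ b, b ≠ a → f b = (h ∘ ⇑σ⁻¹) b) := by
    constructor
    · intro hc b hb
      have hb' : σ⁻¹ b ≠ a := fun e => hb (by rw [← hσa, ← e, Equiv.Perm.apply_inv_self])
      have := hc (σ⁻¹ b) hb'
      simpa [Function.comp, Equiv.Perm.apply_inv_self] using this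
    · intro hc b hb
      have hb' : σ b ≠ a := fun e => hb (σ.injective (e.trans hσa.symm))
      have := hc (σ b) hb'
      simpa [Function.comp, Equiv.Perm.inv_apply_self] using this
  by_cases hc : ∀ b, b ≠ a → (f ∘ ⇑σ) b = h b
  · rw [if_pos hc, if_pos (hcond.mp hc)]
    have e1 : (f ∘ ⇑σ) a = f a := by simp [Function.comp, hσa]
    have e2 : (h ∘ ⇑σ⁻¹) a = h a := by simp [Function.comp, hσa']
    have e3 : ∑ b ∈ Finset.univ.filter (fun b => b < a), pa m ((h ∘ ⇑σ⁻¹) b)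
        = ∑ b ∈ Finset.univ.filter (fun b => b < a), pa m (h b) := by
      refine Finset.sum_nbij' (fun b => σ⁻¹ b) (fun b => σ b) ?_ ?_ ?_ ?_ ?_
      · intro b hb
        simp only [Finset.mem_filter, Finset.mem_univ, true_and] at hb ⊢
        have := (hinv (σ⁻¹ b)).mpr
        rw [Equiv.Perm.apply_inv_self] at this
        exact this hb
      · intro b hb
        simp only [Finset.mem_filter, Finset.mem_univ, true_and] at hb ⊢
        exact (hinv b).mp hb
      · intro b _; exact Equiv.Perm.apply_inv_self σ b
      · intro b _; exact Equiv.Perm.inv_apply_self σ b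
      · intro b _; rfl
    have e4 : Wfun q m σ (f ∘ ⇑σ) = Wfun q m σ h := by
      unfold Wfun
      apply Finset.prod_congr rfl
      intro p hp
      simp only [Finset.mem_filter, Finset.mem_univ, true_and] at hp
      obtain ⟨hp1, hp2⟩ := hp
      have hp1a : p.1 ≠ a := by
        intro e
        rw [e, hσa] at hp2
        have h2 := (hinv p.2).mpr hp2
        rw [e] at hp1
        exact absurd h2 (asymm hp1)
      have hp2a : p.2 ≠ a := by
        intro e
        rw [e, hσa] at hp2
        have h2 : p.1 < a := e ▸ hp1
        exact absurd ((hinv p.1).mp h2) (asymm hp2)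
      rw [hc p.1 hp1a, hc p.2 hp2a]
    rw [e1, e2, e3, e4]
    rw [mul_smul_comm, smul_mul_assoc]
    congr 1
    exact Algebra.commutes _ _
  · rw [if_neg hc, if_neg (fun hcc => hc (hcond.mpr hcc)), mul_zero, zero_mul]

end Aux2
section Aux3


/-- Embedding of a two-slot operator into slots `a`, `b` of the `k`-fold space. -/
noncomputable def Phi {N k : ℕ} (a b : Fin k)
    (X : Matrix (Fin 2 → Fin N) (Fin 2 → Fin N) B) :
    Matrix (Fin k → Fin N) (Fin k → Fin N) B :=
  Matrix.of fun f h =>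
    if ∀ t, t ≠ a → t ≠ b → f t = h t then
      X (fun s => f (![a, b] s)) (fun s => h (![a, b] s))
    else 0

noncomputable def upd {N k : ℕ} (a b : Fin k) (f : Fin k → Fin N) (x : Fin 2 → Fin N) :
    Fin k → Fin N :=
  Function.update (Function.update f a (x 0)) b (x 1)

lemma upd_apply_a {N k : ℕ} {a b : Fin k} (hab : a ≠ b) (f : Fin k → Fin N) (x : Fin 2 → Fin N) :
    upd a b f x a = x 0 := by
  unfold upd; rw [Function.update_of_ne hab, Function.update_self]

lemma upd_apply_b {N k : ℕ} {a b : Fin k} (f : Fin k → Fin N) (x : Fin 2 → Fin N) :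
    upd a b f x b = x 1 := by
  unfold upd; rw [Function.update_self]

lemma upd_apply_other {N k : ℕ} {a b : Fin k} {t : Fin k} (hta : t ≠ a) (htb : t ≠ b)
    (f : Fin k → Fin N) (x : Fin 2 → Fin N) : upd a b f x t = f t := by
  unfold upd; rw [Function.update_of_ne htb, Function.update_of_ne hta]

lemma sum_offab {β : Type*} [AddCommMonoid β] {N k : ℕ} {a b : Fin k} (hab : a ≠ b)
    (f : Fin k → Fin N) (T : (Fin k → Fin N) → β)
    (hT : ∀ g, ¬(∀ t, t ≠ a → t ≠ b → f t = g t) → T g = 0) :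
    ∑ g : Fin k → Fin N, T g = ∑ x : Fin 2 → Fin N, T (upd a b f x) := by
  have hrec : ∀ g : Fin k → Fin N, (∀ t, t ≠ a → t ≠ b → f t = g t) →
      upd a b f ![g a, g b] = g := by
    intro g hg
    funext t
    by_cases hta : t = a
    · subst hta; rw [upd_apply_a hab]; simp
    · by_cases htb : t = b
      · subst htb; rw [upd_apply_b]; simp
      · rw [upd_apply_other hta htb]; exact hg t hta htb
  rw [← Finset.sum_filter_of_ne (s := Finset.univ)
      (p := fun g : Fin k → Fin N => ∀ t, t ≠ a → t ≠ b → f t = g t) (f := T)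
      (fun g _ hg => by by_contra hcc; exact hg (hT g hcc))]
  refine Finset.sum_nbij' (fun g => ![g a, g b]) (fun x => upd a b f x)
    ?_ ?_ ?_ ?_ ?_
  · intro g _; exact Finset.mem_univ _
  · intro x _
    simp only [Finset.mem_filter, Finset.mem_univ, true_and]
    intro t hta htb
    exact (upd_apply_other hta htb f x).symm
  · intro g hg
    simp only [Finset.mem_filter, Finset.mem_univ, true_and] at hg
    exact hrec g hg
  · intro x _
    funext s
    fin_cases s
    · simp [upd_apply_a hab]
    · simp [upd_apply_b]
  · intro g hg
    simp only [Finset.mem_filter, Finset.mem_univ, true_and] at hg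
    rw [hrec g hg]

lemma Phi_mul {N k : ℕ} {a b : Fin k} (hab : a ≠ b)
    (X Y : Matrix (Fin 2 → Fin N) (Fin 2 → Fin N) B) :
    Phi a b X * Phi a b Y = Phi (B := B) a b (X * Y) := by
  ext f h
  rw [Matrix.mul_apply]
  rw [sum_offab hab f _ (fun g hg => by
    rw [show Phi a b X f g = 0 from if_neg hg, zero_mul])]
  by_cases hfh : ∀ t, t ≠ a → t ≠ b → f t = h t
  · have hXg : ∀ x : Fin 2 → Fin N,
        Phi a b X f (upd a b f x) = X (fun s => f (![a, b] s)) x := by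
      intro x
      show (if ∀ t, t ≠ a → t ≠ b → f t = upd a b f x t then
        X (fun s => f (![a, b] s)) (fun s => upd a b f x (![a, b] s)) else 0) = _
      rw [if_pos (fun t hta htb => (upd_apply_other hta htb f x).symm)]
      congr 1
      funext s
      fin_cases s
      · simp [upd_apply_a hab]
      · simp [upd_apply_b]
    have hYg : ∀ x : Fin 2 → Fin N,
        Phi a b Y (upd a b f x) h = Y x (fun s => h (![a, b] s)) := by
      intro x
      show (if ∀ t, t ≠ a → t ≠ b → upd a b f x t = h t then
        Y (fun s => upd a b f x (![a, b] s)) (fun s => h (![a, b] s)) else 0) = _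
      rw [if_pos (fun t hta htb => (upd_apply_other hta htb f x).trans (hfh t hta htb))]
      congr 1
      funext s
      fin_cases s
      · simp [upd_apply_a hab]
      · simp [upd_apply_b]
    simp only [hXg, hYg]
    rw [show Phi (B := B) a b (X * Y) f h
        = (X * Y) (fun s => f (![a, b] s)) (fun s => h (![a, b] s)) from if_pos hfh]
    rw [Matrix.mul_apply]
  · have hz : ∀ x : Fin 2 → Fin N, Phi a b Y (upd a b f x) h = 0 := by
      intro x
      refine if_neg ?_
      intro hcc
      exact hfh (fun t hta htb => (upd_apply_other hta htb f x).symm.trans (hcc t hta htb))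
    simp only [hz, mul_zero, Finset.sum_const_zero]
    exact (if_neg hfh).symm

lemma Phi_zero {N k : ℕ} (a b : Fin k) :
    Phi (B := B) a b (0 : Matrix (Fin 2 → Fin N) (Fin 2 → Fin N) B) = 0 := by
  ext f h
  show (if _ then (0 : Matrix (Fin 2 → Fin N) (Fin 2 → Fin N) B) _ _ else 0) = _
  split_ifs <;> simp

lemma Phi_sub {N k : ℕ} (a b : Fin k) (X Y : Matrix (Fin 2 → Fin N) (Fin 2 → Fin N) B) :
    Phi (B := B) a b (X - Y) = Phi a b X - Phi a b Y := by
  ext f h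
  show (if _ then (X - Y) _ _ else 0) = _
  rw [Matrix.sub_apply]
  show _ = (if ∀ t, t ≠ a → t ≠ b → f t = h t then X _ _ else 0)
    - (if ∀ t, t ≠ a → t ≠ b → f t = h t then Y _ _ else 0)
  split_ifs <;> simp

lemma Phi_add {N k : ℕ} (a b : Fin k) (X Y : Matrix (Fin 2 → Fin N) (Fin 2 → Fin N) B) :
    Phi (B := B) a b (X + Y) = Phi a b X + Phi a b Y := by
  ext f h
  show (if _ then (X + Y) _ _ else 0) = _
  rw [Matrix.add_apply]
  show _ = (if ∀ t, t ≠ a → t ≠ b → f t = h t then X _ _ else 0)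
    + (if ∀ t, t ≠ a → t ≠ b → f t = h t then Y _ _ else 0)
  split_ifs <;> simp

lemma Phi_smul {N k : ℕ} (a b : Fin k) (c : ℂ) (X : Matrix (Fin 2 → Fin N) (Fin 2 → Fin N) B) :
    Phi (B := B) a b (c • X) = c • Phi a b X := by
  ext f h
  show (if _ then (c • X) _ _ else 0) = c • (if ∀ t, t ≠ a → t ≠ b → f t = h t then X _ _ else 0)
  split_ifs <;> simp

lemma Phi_one {N k : ℕ} {a b : Fin k} (hab : a ≠ b) :
    Phi (B := B) a b (1 : Matrix (Fin 2 → Fin N) (Fin 2 → Fin N) B) = 1 := by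
  ext f h
  show (if ∀ t, t ≠ a → t ≠ b → f t = h t then
      (1 : Matrix (Fin 2 → Fin N) (Fin 2 → Fin N) B) _ _ else 0) = _
  rw [Matrix.one_apply, Matrix.one_apply]
  by_cases hfh : f = h
  · subst hfh
    rw [if_pos (fun t _ _ => rfl), if_pos rfl, if_pos rfl]
  · rw [if_neg hfh]
    by_cases hout : ∀ t, t ≠ a → t ≠ b → f t = h t
    · rw [if_pos hout, if_neg]
      intro he
      apply hfh
      funext t
      by_cases hta : t = a
      · subst hta
        have := congrFun he 0
        simpa using this
      · by_cases htb : t = b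
        · subst htb
          have := congrFun he 1
          simpa using this
        · exact hout t hta htb
    · rw [if_neg hout]

/-- The diagonal sign matrix used to conjugate two-slot operators into slots `a < b`. -/
noncomputable def Dmat (m : ℕ) {N k : ℕ} (a b : Fin k) :
    Matrix (Fin k → Fin N) (Fin k → Fin N) ℂ :=
  Matrix.diagonal fun f =>
    (-1 : ℂ) ^ ((pa m (f a) + pa m (f b)) *
      ∑ t ∈ Finset.univ.filter (fun t => t < a), pa m (f t))

lemma Dmat_mul_self (m : ℕ) {N k : ℕ} (a b : Fin k) :
    Dmat m a b * Dmat (N := N) m a b = 1 := by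
  unfold Dmat
  rw [Matrix.diagonal_mul_diagonal]
  have key : ∀ e : ℕ, (-1 : ℂ) ^ e * (-1) ^ e = 1 := by
    intro e
    rw [← pow_add, neg_one_pow_congr (a := e + e) (b := 0) (by omega), pow_zero]
  rw [show (fun f : Fin k → Fin N =>
      (-1 : ℂ) ^ ((pa m (f a) + pa m (f b)) *
        ∑ t ∈ Finset.univ.filter (fun t => t < a), pa m (f t)) *
      (-1 : ℂ) ^ ((pa m (f a) + pa m (f b)) *
        ∑ t ∈ Finset.univ.filter (fun t => t < a), pa m (f t)))
      = fun _ => (1 : ℂ) from funext fun f => key _, Matrix.diagonal_one]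

lemma cmap_diagonal {I : Type*} [DecidableEq I] (d : I → ℂ) :
    (cmap (Matrix.diagonal d) : Matrix I I B) = Matrix.diagonal (fun i => algebraMap ℂ B (d i)) :=
  Matrix.diagonal_map (map_zero _)

lemma DPhiD_apply {m N k : ℕ} {a b : Fin k} (X : Matrix (Fin 2 → Fin N) (Fin 2 → Fin N) B)
    (f h : Fin k → Fin N) :
    (cmap (Dmat m a b) * Phi a b X * cmap (Dmat m a b)
        : Matrix (Fin k → Fin N) (Fin k → Fin N) B) f h
      = ((-1 : ℂ) ^ ((pa m (f a) + pa m (f b)) *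
            (∑ t ∈ Finset.univ.filter (fun t => t < a), pa m (f t))
          + (pa m (h a) + pa m (h b)) *
            (∑ t ∈ Finset.univ.filter (fun t => t < a), pa m (h t))))
        • Phi a b X f h := by
  unfold Dmat
  rw [cmap_diagonal, Matrix.mul_diagonal, Matrix.diagonal_mul, pow_add]
  have hr : ∀ (c : ℂ) (x : B), x * algebraMap ℂ B c = c • x := fun c x => by
    rw [← Algebra.commutes, ← Algebra.smul_def]
  rw [hr, ← Algebra.smul_def, smul_smul, mul_comm]

end Aux3
section Aux4

lemma perm_fin_two_univ :
    (Finset.univ : Finset (Equiv.Perm (Fin 2))) = {1, Equiv.swap 0 1} := by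
  decide

lemma AqS_two (q : ℂ) (m : ℕ) {N : ℕ} :
    AqS q m (Finset.univ : Finset (Fin 2)) (N := N)
      = (2 : ℂ)⁻¹ • (1 - Pperm q m (Equiv.swap 0 1)) := by
  rw [AqS_univ_eq]
  rw [show ∑ σ : Equiv.Perm (Fin 2), sgnC σ • Pperm q m (N := N) σ
      = ∑ σ ∈ ({1, Equiv.swap 0 1} : Finset (Equiv.Perm (Fin 2))),
          sgnC σ • Pperm q m (N := N) σ from by rw [← perm_fin_two_univ]]
  rw [Finset.sum_insert (by decide), Finset.sum_singleton]
  have h1 : sgnC (1 : Equiv.Perm (Fin 2)) = 1 := by simp [sgnC]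
  have h2 : sgnC (Equiv.swap (0 : Fin 2) 1) = -1 := by
    simp [sgnC, Equiv.Perm.sign_swap (by decide : (0 : Fin 2) ≠ 1)]
  rw [h1, h2, Pperm_one, one_smul, neg_one_smul]
  norm_num [sub_eq_add_neg]

lemma HqS_two (q : ℂ) (m : ℕ) {N : ℕ} :
    HqS q m (Finset.univ : Finset (Fin 2)) (N := N)
      = (2 : ℂ)⁻¹ • (1 + Pperm q m (Equiv.swap 0 1)) := by
  unfold HqS
  rw [filter_perm_univ, Finset.card_univ, Fintype.card_fin]
  rw [show ∑ σ ∈ (Finset.univ : Finset (Equiv.Perm (Fin 2))), Pperm q m (N := N) σ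
      = ∑ σ ∈ ({1, Equiv.swap 0 1} : Finset (Equiv.Perm (Fin 2))),
          Pperm q m (N := N) σ from by rw [← perm_fin_two_univ]]
  rw [Finset.sum_insert (by decide), Finset.sum_singleton, Pperm_one]
  norm_num

lemma invset_swap_adj {k : ℕ} {a b : Fin k} (hab : (a : ℕ) + 1 = (b : ℕ)) :
    Finset.univ.filter (fun p : Fin k × Fin k =>
        p.1 < p.2 ∧ Equiv.swap a b p.2 < Equiv.swap a b p.1)
      = {(a, b)} := by
  have hab' : a < b := by rw [Fin.lt_def]; omega
  ext p
  simp only [Finset.mem_filter, Finset.mem_univ, true_and, Finset.mem_singleton]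
  constructor
  · rintro ⟨h1, h2⟩
    by_cases e2a : p.2 = a
    · exfalso
      rw [e2a, Equiv.swap_apply_left] at h2
      have hp1a : p.1 ≠ a := ne_of_lt (e2a ▸ h1)
      have hp1b : p.1 ≠ b := by
        intro e
        rw [e2a] at h1
        rw [e] at h1
        exact absurd hab' (asymm h1)
      rw [Equiv.swap_apply_of_ne_of_ne hp1a hp1b] at h2
      rw [e2a] at h1
      rw [Fin.lt_def] at h1 h2 hab'
      omega
    · by_cases e2b : p.2 = b
      · rw [e2b, Equiv.swap_apply_right] at h2
        by_cases e1a : p.1 = a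
        · exact Prod.ext e1a e2b
        · exfalso
          have e1b : p.1 ≠ b := ne_of_lt (e2b ▸ h1)
          rw [Equiv.swap_apply_of_ne_of_ne e1a e1b] at h2
          rw [e2b] at h1
          rw [Fin.lt_def] at h1 h2
          have := Fin.val_ne_of_ne e1a
          omega
      · exfalso
        rw [Equiv.swap_apply_of_ne_of_ne e2a e2b] at h2
        by_cases e1a : p.1 = a
        · rw [e1a, Equiv.swap_apply_left] at h2
          rw [e1a] at h1
          rw [Fin.lt_def] at h1 h2
          have h2a := Fin.val_ne_of_ne e2a
          have h2b := Fin.val_ne_of_ne e2b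
          omega
        · by_cases e1b : p.1 = b
          · rw [e1b, Equiv.swap_apply_right] at h2
            rw [e1b] at h1
            rw [Fin.lt_def] at h1 h2
            omega
          · rw [Equiv.swap_apply_of_ne_of_ne e1a e1b] at h2
            exact absurd h2 (asymm h1)
  · intro he
    rw [he]
    refine ⟨hab', ?_⟩
    show Equiv.swap a b b < Equiv.swap a b a
    rw [Equiv.swap_apply_left, Equiv.swap_apply_right]
    exact hab'

lemma Pperm_swap_adj (q : ℂ) (m : ℕ) {N k : ℕ} {a b : Fin k} (hab : (a : ℕ) + 1 = (b : ℕ))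
    (f g : Fin k → Fin N) :
    Pperm q m (Equiv.swap a b) f g
      = if f = g ∘ ⇑(Equiv.swap a b) then Ffac q m (g a) (g b) else 0 := by
  rw [Pperm_apply, Equiv.swap_inv]
  unfold Wfun
  rw [invset_swap_adj hab, Finset.prod_singleton]

end Aux4
section Aux5

lemma Mslot_a_conj (m : ℕ) {N k : ℕ} {a b : Fin k} (hab : (a : ℕ) + 1 = (b : ℕ))
    (M : Matrix (Fin N) (Fin N) B) :
    Mslot m M a
      = cmap (Dmat m a b) * Phi a b (Mslot m M (0 : Fin 2)) * cmap (Dmat m a b) := by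
  have hane : a ≠ b := fun e => by
    have := congrArg Fin.val e; omega
  have hf0 : (Finset.univ.filter (fun s : Fin 2 => s < 0)) = ∅ := by decide
  ext f h
  rw [DPhiD_apply, Mslot_apply]
  by_cases hc : ∀ t, t ≠ a → f t = h t
  · have houter : ∀ t, t ≠ a → t ≠ b → f t = h t := fun t hta _ => hc t hta
    have hfb : f b = h b := hc b (Ne.symm hane)
    rw [if_pos hc]
    rw [show Phi (B := B) a b (Mslot m M (0 : Fin 2)) f h
        = Mslot m M (0 : Fin 2) (fun s => f (![a, b] s)) (fun s => h (![a, b] s)) from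
        if_pos houter]
    rw [Mslot_apply]
    rw [if_pos (fun s hs => by
      fin_cases s
      · exact absurd rfl hs
      · simpa using hfb)]
    rw [hf0, Finset.sum_empty]
    simp only [Matrix.cons_val_zero]
    have hS : ∑ t ∈ Finset.univ.filter (fun t => t < a), pa m (f t)
        = ∑ t ∈ Finset.univ.filter (fun t => t < a), pa m (h t) :=
      Finset.sum_congr rfl (fun t ht => by
        rw [hc t (ne_of_lt (Finset.mem_filter.mp ht).2)])
    rw [smul_smul, ← pow_add, hS, show pa m (f b) = pa m (h b) from by rw [hfb]]
    congr 1
    apply neg_one_pow_congr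
    rcases pa01 m (f a) with h1 | h1 <;> rcases pa01 m (h a) with h2 | h2 <;>
      rcases pa01 m (h b) with h3 | h3 <;> rw [h1, h2, h3] <;> omega
  · rw [if_neg hc]
    have hz : Phi (B := B) a b (Mslot m M (0 : Fin 2)) f h = 0 := by
      by_cases houter : ∀ t, t ≠ a → t ≠ b → f t = h t
      · rw [show Phi (B := B) a b (Mslot m M (0 : Fin 2)) f h
            = Mslot m M (0 : Fin 2) (fun s => f (![a, b] s)) (fun s => h (![a, b] s)) from
            if_pos houter]
        rw [Mslot_apply, if_neg]
        intro hinner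
        apply hc
        intro t hta
        by_cases htb : t = b
        · subst htb
          have := hinner 1 (by decide)
          simpa using this
        · exact houter t hta htb
      · exact if_neg houter
    rw [hz, smul_zero]

lemma Mslot_b_conj (m : ℕ) {N k : ℕ} {a b : Fin k} (hab : (a : ℕ) + 1 = (b : ℕ))
    (M : Matrix (Fin N) (Fin N) B) :
    Mslot m M b
      = cmap (Dmat m a b) * Phi a b (Mslot m M (1 : Fin 2)) * cmap (Dmat m a b) := by
  have hane : a ≠ b := fun e => by
    have := congrArg Fin.val e; omega
  have hf1 : (Finset.univ.filter (fun s : Fin 2 => s < 1)) = {0} := by decide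
  have ha_not : a ∉ Finset.univ.filter (fun t : Fin k => t < a) := by
    simp [lt_irrefl]
  have hsplit : Finset.univ.filter (fun t : Fin k => t < b)
      = insert a (Finset.univ.filter (fun t : Fin k => t < a)) := by
    ext t
    simp only [Finset.mem_filter, Finset.mem_univ, true_and, Finset.mem_insert]
    rw [Fin.lt_def, Fin.lt_def]
    constructor
    · intro hlt
      by_cases e : (t : ℕ) = (a : ℕ)
      · exact Or.inl (Fin.ext e)
      · exact Or.inr (by omega)
    · rintro (rfl | hlt)
      · omega
      · omega
  ext f h
  rw [DPhiD_apply, Mslot_apply]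
  by_cases hc : ∀ t, t ≠ b → f t = h t
  · have houter : ∀ t, t ≠ a → t ≠ b → f t = h t := fun t _ htb => hc t htb
    have hfa : f a = h a := hc a hane
    rw [if_pos hc]
    rw [show Phi (B := B) a b (Mslot m M (1 : Fin 2)) f h
        = Mslot m M (1 : Fin 2) (fun s => f (![a, b] s)) (fun s => h (![a, b] s)) from
        if_pos houter]
    rw [Mslot_apply]
    rw [if_pos (fun s hs => by
      fin_cases s
      · simpa using hfa
      · exact absurd rfl hs)]
    rw [hf1, Finset.sum_singleton]
    simp only [Matrix.cons_val_zero, Matrix.cons_val_one, Matrix.head_cons]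
    rw [hsplit, Finset.sum_insert ha_not]
    have hS : ∑ t ∈ Finset.univ.filter (fun t => t < a), pa m (f t)
        = ∑ t ∈ Finset.univ.filter (fun t => t < a), pa m (h t) :=
      Finset.sum_congr rfl (fun t ht => by
        have hlt := (Finset.mem_filter.mp ht).2
        have htb : t ≠ b := by
          intro e; rw [e, Fin.lt_def] at hlt; omega
        rw [hc t htb])
    rw [smul_smul, ← pow_add, hS, show pa m (f a) = pa m (h a) from by rw [hfa]]
    congr 1
    apply neg_one_pow_congr
    rcases pa01 m (f b) with h1 | h1 <;> rcases pa01 m (h b) with h2 | h2 <;>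
      rcases pa01 m (h a) with h3 | h3 <;> rw [h1, h2, h3] <;> omega
  · rw [if_neg hc]
    have hz : Phi (B := B) a b (Mslot m M (1 : Fin 2)) f h = 0 := by
      by_cases houter : ∀ t, t ≠ a → t ≠ b → f t = h t
      · rw [show Phi (B := B) a b (Mslot m M (1 : Fin 2)) f h
            = Mslot m M (1 : Fin 2) (fun s => f (![a, b] s)) (fun s => h (![a, b] s)) from
            if_pos houter]
        rw [Mslot_apply, if_neg]
        intro hinner
        apply hc
        intro t htb
        by_cases hta : t = a
        · subst hta
          have := hinner 0 (by decide)
          simpa using this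
        · exact houter t hta htb
      · exact if_neg houter
    rw [hz, smul_zero]

lemma Pswap_conj (q : ℂ) (m : ℕ) {N k : ℕ} {a b : Fin k} (hab : (a : ℕ) + 1 = (b : ℕ)) :
    (cmap (Pperm q m (Equiv.swap a b)) : Matrix (Fin k → Fin N) (Fin k → Fin N) B)
      = cmap (Dmat m a b) * Phi a b (cmap (Pperm q m (Equiv.swap (0 : Fin 2) 1)))
        * cmap (Dmat m a b) := by
  have hane : a ≠ b := fun e => by
    have := congrArg Fin.val e; omega
  ext f h
  rw [DPhiD_apply, cmap_apply, Pperm_swap_adj q m hab, apply_ite (algebraMap ℂ B), map_zero]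
  by_cases hcond : f = h ∘ ⇑(Equiv.swap a b)
  · have houter : ∀ t, t ≠ a → t ≠ b → f t = h t := by
      intro t hta htb
      rw [hcond]
      simp [Function.comp, Equiv.swap_apply_of_ne_of_ne hta htb]
    have hfa : f a = h b := by rw [hcond]; simp [Function.comp]
    have hfb : f b = h a := by rw [hcond]; simp [Function.comp]
    rw [if_pos hcond]
    rw [show Phi (B := B) a b (cmap (Pperm q m (Equiv.swap (0 : Fin 2) 1))) f h
        = cmap (Pperm q m (Equiv.swap (0 : Fin 2) 1))
            (fun s => f (![a, b] s)) (fun s => h (![a, b] s)) from if_pos houter]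
    rw [cmap_apply, Pperm_swap_adj q m (show ((0 : Fin 2) : ℕ) + 1 = ((1 : Fin 2) : ℕ) by decide),
      apply_ite (algebraMap ℂ B), map_zero]
    rw [if_pos ?hin]
    case hin =>
      funext s
      fin_cases s
      · simpa using hfa
      · simpa using hfb
    simp only [Matrix.cons_val_zero, Matrix.cons_val_one, Matrix.head_cons]
    have hS : ∑ t ∈ Finset.univ.filter (fun t => t < a), pa m (f t)
        = ∑ t ∈ Finset.univ.filter (fun t => t < a), pa m (h t) :=
      Finset.sum_congr rfl (fun t ht => by
        have hlt := (Finset.mem_filter.mp ht).2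
        have hta : t ≠ a := ne_of_lt hlt
        have htb : t ≠ b := by intro e; rw [e, Fin.lt_def] at hlt; omega
        rw [houter t hta htb])
    rw [hS, show pa m (f a) = pa m (h b) from by rw [hfa],
      show pa m (f b) = pa m (h a) from by rw [hfb]]
    rw [show (pa m (h b) + pa m (h a)) * (∑ t ∈ Finset.univ.filter (fun t => t < a), pa m (h t))
        + (pa m (h a) + pa m (h b)) * (∑ t ∈ Finset.univ.filter (fun t => t < a), pa m (h t))
        = 2 * ((pa m (h a) + pa m (h b)) *
            ∑ t ∈ Finset.univ.filter (fun t => t < a), pa m (h t)) from by ring,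
      pow_mul, neg_one_sq, one_pow, one_smul]
  · rw [if_neg hcond]
    have hz : Phi (B := B) a b (cmap (Pperm q m (Equiv.swap (0 : Fin 2) 1))) f h = 0 := by
      by_cases houter : ∀ t, t ≠ a → t ≠ b → f t = h t
      · rw [show Phi (B := B) a b (cmap (Pperm q m (Equiv.swap (0 : Fin 2) 1))) f h
            = cmap (Pperm q m (Equiv.swap (0 : Fin 2) 1))
                (fun s => f (![a, b] s)) (fun s => h (![a, b] s)) from if_pos houter,
          cmap_apply,
          Pperm_swap_adj q m (show ((0 : Fin 2) : ℕ) + 1 = ((1 : Fin 2) : ℕ) by decide),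
          apply_ite (algebraMap ℂ B), map_zero, if_neg]
        intro hin
        apply hcond
        funext t
        by_cases hta : t = a
        · subst hta
          have := congrFun hin 0
          simp only [Matrix.cons_val_zero, Matrix.cons_val_one, Matrix.head_cons,
            Function.comp_apply, Equiv.swap_apply_left] at this ⊢
          simpa using this
        · by_cases htb : t = b
          · subst htb
            have := congrFun hin 1
            simp only [Matrix.cons_val_zero, Matrix.cons_val_one, Matrix.head_cons,
              Function.comp_apply, Equiv.swap_apply_right] at this ⊢
            simpa using this
          · rw [houter t hta htb]
            simp [Function.comp, Equiv.swap_apply_of_ne_of_ne hta htb]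
      · exact if_neg houter
    rw [hz, smul_zero]

lemma DD_one (m : ℕ) {N k : ℕ} (a b : Fin k) :
    (cmap (Dmat m a b) : Matrix (Fin k → Fin N) (Fin k → Fin N) B) * cmap (Dmat m a b) = 1 := by
  rw [← cmap_mul, Dmat_mul_self, cmap_one]

lemma manin_transport {q : ℂ} (m : ℕ) {N k : ℕ} {a b : Fin k} (hab : (a : ℕ) + 1 = (b : ℕ))
    (M : Matrix (Fin N) (Fin N) B) (hM : IsManin2 q m M) :
    (cmap ((2 : ℂ)⁻¹ • (1 - Pperm q m (Equiv.swap a b)))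
        : Matrix (Fin k → Fin N) (Fin k → Fin N) B)
      * Mslot m M a * Mslot m M b
      * cmap ((2 : ℂ)⁻¹ • (1 + Pperm q m (Equiv.swap a b))) = 0 := by
  have hane : a ≠ b := fun e => by
    have := congrArg Fin.val e; omega
  have hA : (cmap ((2 : ℂ)⁻¹ • (1 - Pperm q m (Equiv.swap a b)))
      : Matrix (Fin k → Fin N) (Fin k → Fin N) B)
      = cmap (Dmat m a b) * Phi a b (cmap (AqS q m (Finset.univ : Finset (Fin 2))))
        * cmap (Dmat m a b) := by
    have e2 : (cmap (AqS q m (Finset.univ : Finset (Fin 2))) : Matrix (Fin 2 → Fin N) _ B)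
        = (2 : ℂ)⁻¹ • (1 - cmap (Pperm q m (Equiv.swap (0 : Fin 2) 1))) := by
      rw [AqS_two, cmap_smul, cmap_sub, cmap_one]
    rw [cmap_smul, cmap_sub, cmap_one, e2, Phi_smul, Phi_sub, Phi_one hane]
    rw [mul_smul_comm, smul_mul_assoc]
    congr 1
    rw [mul_sub, sub_mul, mul_one, DD_one, Pswap_conj q m hab]
  have hH : (cmap ((2 : ℂ)⁻¹ • (1 + Pperm q m (Equiv.swap a b)))
      : Matrix (Fin k → Fin N) (Fin k → Fin N) B)
      = cmap (Dmat m a b) * Phi a b (cmap (HqS q m (Finset.univ : Finset (Fin 2))))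
        * cmap (Dmat m a b) := by
    have e2 : (cmap (HqS q m (Finset.univ : Finset (Fin 2))) : Matrix (Fin 2 → Fin N) _ B)
        = (2 : ℂ)⁻¹ • (1 + cmap (Pperm q m (Equiv.swap (0 : Fin 2) 1))) := by
      rw [HqS_two, cmap_smul, cmap_add, cmap_one]
    rw [cmap_smul, cmap_add, cmap_one, e2, Phi_smul, Phi_add, Phi_one hane]
    rw [mul_smul_comm, smul_mul_assoc]
    congr 1
    rw [mul_add, add_mul, mul_one, DD_one, Pswap_conj q m hab]
  rw [hA, hH, Mslot_a_conj m hab M, Mslot_b_conj m hab M]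
  have hDD' : ∀ X : Matrix (Fin k → Fin N) (Fin k → Fin N) B,
      cmap (Dmat m a b) * (cmap (Dmat m a b) * X) = X := by
    intro X
    rw [← mul_assoc, DD_one, one_mul]
  simp only [mul_assoc]
  simp only [hDD']
  have hz : (cmap (AqS q m (Finset.univ : Finset (Fin 2))) * Mslot m M (0 : Fin 2))
      * (Mslot m M (1 : Fin 2) * cmap (HqS q m (Finset.univ : Finset (Fin 2)))) = 0 := by
    have hman := hM
    unfold IsManin2 at hman
    calc (cmap (AqS q m (Finset.univ : Finset (Fin 2))) * Mslot m M (0 : Fin 2))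
        * (Mslot m M (1 : Fin 2) * cmap (HqS q m (Finset.univ : Finset (Fin 2))))
        = cmap (AqS q m (Finset.univ : Finset (Fin 2))) * Mslot m M (0 : Fin 2)
          * Mslot m M (1 : Fin 2) * cmap (HqS q m (Finset.univ : Finset (Fin 2))) := by
          simp only [mul_assoc]
      _ = 0 := hman
  have hmid : Phi (B := B) a b (cmap (AqS q m (Finset.univ : Finset (Fin 2))))
      * (Phi a b (Mslot m M (0 : Fin 2)) * (Phi a b (Mslot m M (1 : Fin 2))
        * (Phi a b (cmap (HqS q m (Finset.univ : Finset (Fin 2)))) * cmap (Dmat m a b)))) = 0 := by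
    have h1 : Phi (B := B) a b (Mslot m M (1 : Fin 2))
        * (Phi a b (cmap (HqS q m (Finset.univ : Finset (Fin 2)))) * cmap (Dmat m a b))
        = Phi a b (Mslot m M (1 : Fin 2) * cmap (HqS q m (Finset.univ : Finset (Fin 2))))
          * cmap (Dmat m a b) := by
      rw [← mul_assoc, Phi_mul hane]
    rw [h1, ← mul_assoc, Phi_mul hane, ← mul_assoc, Phi_mul hane, hz, Phi_zero, zero_mul]
  rw [hmid, mul_zero]

end Aux5
section Aux6

lemma MProd_split (m : ℕ) {N k : ℕ} (M : Matrix (Fin N) (Fin N) B) {a b : Fin k}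
    (hab : (a : ℕ) + 1 = (b : ℕ)) :
    MProd m M k
      = ((List.ofFn fun t : Fin k => Mslot m M t).take (a : ℕ)).prod
        * Mslot m M a * Mslot m M b
        * ((List.ofFn fun t : Fin k => Mslot m M t).drop ((a : ℕ) + 2)).prod := by
  unfold MProd
  have hlen : (List.ofFn fun t : Fin k => Mslot m M t).length = k := by
    rw [List.length_ofFn]
  have hb : (b : ℕ) < k := b.isLt
  have h1 : (a : ℕ) < (List.ofFn fun t : Fin k => Mslot m M t).length := by omega
  have h2 : (a : ℕ) + 1 < (List.ofFn fun t : Fin k => Mslot m M t).length := by omega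
  conv_lhs => rw [← List.prod_take_mul_prod_drop (List.ofFn fun t : Fin k => Mslot m M t) (a : ℕ)]
  rw [List.drop_eq_getElem_cons h1, List.drop_eq_getElem_cons h2]
  rw [List.prod_cons, List.prod_cons]
  rw [List.getElem_ofFn h1, List.getElem_ofFn h2]
  rw [show ((⟨(a : ℕ), by omega⟩ : Fin k)) = a from Fin.ext rfl,
    show ((⟨(a : ℕ) + 1, by omega⟩ : Fin k)) = b from Fin.ext hab]
  simp only [mul_assoc]

lemma mem_take_ofFn {α : Type*} {k : ℕ} (g : Fin k → α) (j : ℕ) {x : α}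
    (hx : x ∈ (List.ofFn g).take j) : ∃ t : Fin k, (t : ℕ) < j ∧ x = g t := by
  rw [List.mem_iff_getElem] at hx
  obtain ⟨i, hi, he⟩ := hx
  have hi' : i < j ∧ i < k := by
    simpa [List.length_take, List.length_ofFn, Nat.lt_min] using hi
  rw [List.getElem_take, List.getElem_ofFn] at he
  exact ⟨⟨i, hi'.2⟩, hi'.1, he.symm⟩

lemma mem_drop_ofFn {α : Type*} {k : ℕ} (g : Fin k → α) (j : ℕ) {x : α}
    (hx : x ∈ (List.ofFn g).drop j) : ∃ t : Fin k, j ≤ (t : ℕ) ∧ x = g t := by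
  rw [List.mem_iff_getElem] at hx
  obtain ⟨i, hi, he⟩ := hx
  have hi2 : i < k - j := by
    simpa [List.length_drop, List.length_ofFn] using hi
  have hi' : j + i < k := by omega
  rw [List.getElem_drop, List.getElem_ofFn] at he
  exact ⟨⟨j + i, hi'⟩, Nat.le_add_right j i, he.symm⟩

lemma main_step {q : ℂ} (hq : q ≠ 0) (m : ℕ) {N k : ℕ} (M : Matrix (Fin N) (Fin N) B)
    (hM : IsManin2 q m M) {a b : Fin k} (hab : (a : ℕ) + 1 = (b : ℕ)) :
    cmap (AqS q m (Finset.univ : Finset (Fin k))) * MProd m M k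
        * cmap (Pperm q m (Equiv.swap a b))
      = -(cmap (AqS q m (Finset.univ : Finset (Fin k))) * MProd m M k) := by
  have hane : a ≠ b := fun e => by
    have := congrArg Fin.val e; omega
  have hcomm : ∀ t : Fin k, t ≠ a → t ≠ b →
      ∀ c : ℂ, ∀ s : ℂ, Commute (cmap (c • (1 + s • Pperm q m (Equiv.swap a b)))
        : Matrix (Fin k → Fin N) (Fin k → Fin N) B) (Mslot m M t) := by
    intro t hta htb c s
    have hσt : Equiv.swap a b t = t := Equiv.swap_apply_of_ne_of_ne hta htb
    have hinv : ∀ u, u < t ↔ Equiv.swap a b u < t := by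
      intro u
      have hta' := Fin.val_ne_of_ne hta
      have htb' := Fin.val_ne_of_ne htb
      by_cases hua : u = a
      · subst hua
        rw [Equiv.swap_apply_left, Fin.lt_def, Fin.lt_def]
        omega
      · by_cases hub : u = b
        · subst hub
          rw [Equiv.swap_apply_right, Fin.lt_def, Fin.lt_def]
          omega
        · rw [Equiv.swap_apply_of_ne_of_ne hua hub]
    have hP : Commute (cmap (Pperm q m (Equiv.swap a b))
        : Matrix (Fin k → Fin N) (Fin k → Fin N) B) (Mslot m M t) :=
      commute_Pperm_Mslot q m M (Equiv.swap a b) t hσt hinv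
    rw [cmap_smul, cmap_add, cmap_one, cmap_smul]
    exact (((Commute.one_left _).add_left (hP.smul_left s)).smul_left c)
  have hA2 : cmap (AqS q m (Finset.univ : Finset (Fin k)))
      * (cmap ((2 : ℂ)⁻¹ • (1 - Pperm q m (Equiv.swap a b)))
          : Matrix (Fin k → Fin N) (Fin k → Fin N) B)
      = cmap (AqS q m (Finset.univ : Finset (Fin k))) := by
    rw [← cmap_mul]
    congr 1
    rw [mul_smul_comm, mul_sub, mul_one, AqS_mul_Pperm hq m (Equiv.swap a b)]
    rw [show sgnC (Equiv.swap a b) = -1 from by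
      simp [sgnC, Equiv.Perm.sign_swap hane]]
    rw [neg_one_smul, sub_neg_eq_add, ← two_smul ℂ, smul_smul,
      inv_mul_cancel₀ (two_ne_zero), one_smul]
  have key : cmap (AqS q m (Finset.univ : Finset (Fin k))) * MProd m M k
      * cmap ((2 : ℂ)⁻¹ • (1 + Pperm q m (Equiv.swap a b))) = 0 := by
    rw [← hA2, MProd_split m M hab]
    set Tp := ((List.ofFn fun t : Fin k => Mslot m M t).take (a : ℕ)).prod with hTp
    set Rp := ((List.ofFn fun t : Fin k => Mslot m M t).drop ((a : ℕ) + 2)).prod with hRp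
    have hsub : (1 : Matrix (Fin k → Fin N) (Fin k → Fin N) ℂ) - Pperm q m (Equiv.swap a b)
        = 1 + (-1 : ℂ) • Pperm q m (Equiv.swap a b) := by
      rw [neg_one_smul, sub_eq_add_neg]
    have hcT : Commute (cmap ((2 : ℂ)⁻¹ • (1 - Pperm q m (Equiv.swap a b)))
        : Matrix (Fin k → Fin N) (Fin k → Fin N) B) Tp := by
      rw [hsub, hTp]
      apply Commute.list_prod_right
      intro x hx
      obtain ⟨t, htj, rfl⟩ := mem_take_ofFn _ _ hx
      have hta : t ≠ a := fun e => by
        have := congrArg Fin.val e; omega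
      have htb : t ≠ b := fun e => by
        have := congrArg Fin.val e; omega
      exact hcomm t hta htb _ _
    have hcR : Commute (cmap ((2 : ℂ)⁻¹ • (1 + Pperm q m (Equiv.swap a b)))
        : Matrix (Fin k → Fin N) (Fin k → Fin N) B) Rp := by
      rw [hRp]
      rw [show (1 : Matrix (Fin k → Fin N) (Fin k → Fin N) ℂ) + Pperm q m (Equiv.swap a b)
          = 1 + (1 : ℂ) • Pperm q m (Equiv.swap a b) from by rw [one_smul]]
      apply Commute.list_prod_right
      intro x hx
      obtain ⟨t, htj, rfl⟩ := mem_drop_ofFn _ _ hx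
      have hta : t ≠ a := fun e => by
        have := congrArg Fin.val e; omega
      have htb : t ≠ b := fun e => by
        have := congrArg Fin.val e; omega
      exact hcomm t hta htb _ _
    have hmid : (cmap ((2 : ℂ)⁻¹ • (1 - Pperm q m (Equiv.swap a b)))
        : Matrix (Fin k → Fin N) (Fin k → Fin N) B)
        * (Mslot m M a * (Mslot m M b
          * (cmap ((2 : ℂ)⁻¹ • (1 + Pperm q m (Equiv.swap a b))) * Rp))) = 0 := by
      have h0 := manin_transport m hab M hM
      calc (cmap ((2 : ℂ)⁻¹ • (1 - Pperm q m (Equiv.swap a b)))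
          : Matrix (Fin k → Fin N) (Fin k → Fin N) B)
          * (Mslot m M a * (Mslot m M b
            * (cmap ((2 : ℂ)⁻¹ • (1 + Pperm q m (Equiv.swap a b))) * Rp)))
          = (cmap ((2 : ℂ)⁻¹ • (1 - Pperm q m (Equiv.swap a b)))
              * Mslot m M a * Mslot m M b
              * cmap ((2 : ℂ)⁻¹ • (1 + Pperm q m (Equiv.swap a b)))) * Rp := by
            simp only [mul_assoc]
        _ = 0 * Rp := by rw [h0]
        _ = 0 := zero_mul _
    simp only [mul_assoc]
    rw [(hcR.symm).eq]
    rw [← mul_assoc (cmap ((2 : ℂ)⁻¹ • (1 - Pperm q m (Equiv.swap a b)))) Tp, hcT.eq,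
      mul_assoc]
    rw [hmid, mul_zero, mul_zero]
  have hexp : (cmap ((2 : ℂ)⁻¹ • (1 + Pperm q m (Equiv.swap a b)))
      : Matrix (Fin k → Fin N) (Fin k → Fin N) B)
      = (2 : ℂ)⁻¹ • (1 + cmap (Pperm q m (Equiv.swap a b))) := by
    rw [cmap_smul, cmap_add, cmap_one]
  rw [hexp] at key
  rw [mul_smul_comm, mul_add, mul_one] at key
  have key2 : cmap (AqS q m (Finset.univ : Finset (Fin k))) * MProd m M k
      + cmap (AqS q m (Finset.univ : Finset (Fin k))) * MProd m M k
        * cmap (Pperm q m (Equiv.swap a b)) = 0 := by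
    have h2 := congrArg (fun W : Matrix (Fin k → Fin N) (Fin k → Fin N) B => (2 : ℂ) • W) key
    simp only [smul_smul, smul_zero] at h2
    rwa [mul_inv_cancel₀ (by norm_num : (2 : ℂ) ≠ 0), one_smul] at h2
  exact eq_neg_of_add_eq_zero_right key2

end Aux6
section Aux7

lemma Q_all {q : ℂ} (hq : q ≠ 0) (m : ℕ) {N k : ℕ} (M : Matrix (Fin N) (Fin N) B)
    (hM : IsManin2 q m M) (σ : Equiv.Perm (Fin k)) :
    cmap (AqS q m (Finset.univ : Finset (Fin k))) * MProd m M k * cmap (Pperm q m σ)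
      = sgnC σ • (cmap (AqS q m (Finset.univ : Finset (Fin k))) * MProd m M k) := by
  have Qmul : ∀ σ τ : Equiv.Perm (Fin k),
      cmap (AqS q m (Finset.univ : Finset (Fin k))) * MProd m M k * cmap (Pperm q m σ)
        = sgnC σ • (cmap (AqS q m (Finset.univ : Finset (Fin k))) * MProd m M k) →
      cmap (AqS q m (Finset.univ : Finset (Fin k))) * MProd m M k * cmap (Pperm q m τ)
        = sgnC τ • (cmap (AqS q m (Finset.univ : Finset (Fin k))) * MProd m M k) →
      cmap (AqS q m (Finset.univ : Finset (Fin k))) * MProd m M k * cmap (Pperm q m (σ * τ))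
        = sgnC (σ * τ) • (cmap (AqS q m (Finset.univ : Finset (Fin k))) * MProd m M k) := by
    intro σ τ hσ hτ
    rw [← Pperm_mul hq, cmap_mul, ← mul_assoc, hσ, smul_mul_assoc, hτ, smul_smul, sgnC_mul]
  have Qadj : ∀ a b : Fin k, (a : ℕ) + 1 = (b : ℕ) →
      cmap (AqS q m (Finset.univ : Finset (Fin k))) * MProd m M k
          * cmap (Pperm q m (Equiv.swap a b))
        = sgnC (Equiv.swap a b)
          • (cmap (AqS q m (Finset.univ : Finset (Fin k))) * MProd m M k) := by
    intro a b hab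
    have hane : a ≠ b := fun e => by
      have := congrArg Fin.val e; omega
    rw [main_step hq m M hM hab,
      show sgnC (Equiv.swap a b) = -1 from by simp [sgnC, Equiv.Perm.sign_swap hane],
      neg_one_smul]
  have Qdist : ∀ d : ℕ, ∀ a b : Fin k, (b : ℕ) = (a : ℕ) + d + 1 →
      cmap (AqS q m (Finset.univ : Finset (Fin k))) * MProd m M k
          * cmap (Pperm q m (Equiv.swap a b))
        = sgnC (Equiv.swap a b)
          • (cmap (AqS q m (Finset.univ : Finset (Fin k))) * MProd m M k) := by
    intro d
    induction d with
    | zero =>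
      intro a b hab
      exact Qadj a b (by omega)
    | succ d ih =>
      intro a b hab
      have hz : (a : ℕ) + d + 1 < k := by
        have := b.isLt; omega
      set z : Fin k := ⟨(a : ℕ) + d + 1, hz⟩ with hzdef
      have h1 := ih a z (by simp [hzdef])
      have h2 := Qadj z b (by simp [hzdef]; omega)
      have haz : a ≠ z := fun e => by
        have := congrArg Fin.val e
        rw [hzdef] at this
        simp at this
        omega
      have hay : a ≠ b := fun e => by
        have := congrArg Fin.val e; omega
      have hswap : Equiv.swap a b = Equiv.swap z b * Equiv.swap a z * Equiv.swap z b := by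
        have h := Equiv.swap_apply_apply (Equiv.swap z b) a z
        rw [Equiv.swap_apply_of_ne_of_ne haz hay, Equiv.swap_apply_left] at h
        rw [Equiv.swap_inv] at h
        exact h
      rw [hswap]
      exact Qmul _ _ (Qmul _ _ h2 h1) h2
  have Qswap : ∀ a b : Fin k, a ≠ b →
      cmap (AqS q m (Finset.univ : Finset (Fin k))) * MProd m M k
          * cmap (Pperm q m (Equiv.swap a b))
        = sgnC (Equiv.swap a b)
          • (cmap (AqS q m (Finset.univ : Finset (Fin k))) * MProd m M k) := by
    intro a b hab
    rcases lt_trichotomy a b with h | h | h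
    · rw [Fin.lt_def] at h
      exact Qdist ((b : ℕ) - (a : ℕ) - 1) a b (by omega)
    · exact absurd h hab
    · rw [Fin.lt_def] at h
      rw [Equiv.swap_comm]
      exact Qdist ((a : ℕ) - (b : ℕ) - 1) b a (by omega)
  refine Equiv.Perm.swap_induction_on σ ?_ ?_
  · rw [Pperm_one, cmap_one, mul_one,
      show sgnC (1 : Equiv.Perm (Fin k)) = 1 from by simp [sgnC], one_smul]
  · intro τ x y hxy ih
    exact Qmul _ _ (Qswap x y hxy) ih

end Aux7
/-- `𝒜_k^q M₁⋯M_k 𝒜_k^q = 𝒜_k^q M₁⋯M_k` for a `q`-super Manin matrix. -/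
theorem stmt6 (m n k : ℕ) (q : ℂ) (hq : q ≠ 0) (A : Type*) [Ring A] [Algebra ℂ A]
    (M : Matrix (Fin (m + n)) (Fin (m + n)) A) (hM : IsManin2 q m M) :
    cmap (AqS q m (Finset.univ : Finset (Fin k))) * MProd m M k *
        cmap (AqS q m (Finset.univ : Finset (Fin k)))
      = cmap (AqS q m (Finset.univ : Finset (Fin k))) * MProd m M k := by
  have hQ := Q_all hq m M hM (k := k)
  set X := cmap (AqS q m (Finset.univ : Finset (Fin k))) * MProd m M k with hX
  rw [AqS_univ_eq]
  rw [cmap_smul, cmap_sum]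
  rw [mul_smul_comm, Finset.mul_sum]
  have hterm : ∀ σ ∈ (Finset.univ : Finset (Equiv.Perm (Fin k))),
      X * cmap (sgnC σ • Pperm q m σ) = X := by
    intro σ _
    rw [cmap_smul, mul_smul_comm, hQ σ, smul_smul, sgnC_sq, one_smul]
  rw [Finset.sum_congr rfl hterm, Finset.sum_const, Finset.card_univ, Fintype.card_perm,
    Fintype.card_fin]
  rw [← Nat.cast_smul_eq_nsmul ℂ, smul_smul,
    inv_mul_cancel₀ (by exact_mod_cast Nat.factorial_ne_zero k), one_smul]

end QSM
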